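/- (Elimination condition in Rank-Search.) Assume the uniform estimation event |p̂ i − p i| ≤ γ for all arms, the score-separation assumption (every positive arm's Borda score exceeds every negative arm's), and that binary search on the rank-sorted list returns a boundary b such that arm i_{b+1} is truly positive and arm i_b is truly negative. Then every arm i with Δ̄ᶜ i > 4γ is labeled in this round: if i is positive, then p̂ i − p̂(i_{b+1}) > 2γ, and if i is negative, then p̂ i − p̂(i_b) < −2γ. -/

import Mathlib

/-!
A gap `Δ̄ᶜ i > 4γ` provides a witness arm `j` whose true score is more than `4γ` away both from
that of `i` and from the closest score of the opposite class. Since estimates are off by at most `γ`, the estimated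
order of `i`, `j` and the boundary arms agrees with the true one up to margins of `2γ`: `j` is
estimated beyond `i_b` (resp. below `i_{b+1}`), hence by adjacency of the boundary at or beyond
`i_{b+1}` (resp. at or below `i_b`), and `i` is estimated more than `2γ` beyond `j`. The negative
case is the positive one for the negated scores, with the roles of `i_b` and `i_{b+1}` swapped.
-/

/-- The gap `Δ̄ᶜ i`: for a positive arm `i` (`μ i ≥ τ`), the max over positive arms `j` of
`min (p j - p i_l) (p i - p j)`; for a negative arm, the max over negative arms `j` of
`min (p j - p i) (p i_u - p j)`. -/
noncomputable def deltaBar (K : ℕ) (μ : Fin K → ℝ) (τ : ℝ) (p : Fin K → ℝ)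
    (i_u i_l : Fin K) (i : Fin K) : ℝ :=
  if τ ≤ μ i then
    sSup {x | ∃ j, τ ≤ μ j ∧ x = min (p j - p i_l) (p i - p j)}
  else
    sSup {x | ∃ j, μ j < τ ∧ x = min (p j - p i) (p i_u - p j)}

lemma exists_lt_of_lt_sSup_setOf {ι : Type*} {P : ι → Prop} {f : ι → ℝ} {c : ℝ}
    (hne : ∃ j, P j) (h : c < sSup {x | ∃ j, P j ∧ x = f j}) : ∃ j, P j ∧ c < f j := by
  obtain ⟨j, hj⟩ := hne
  have hne : {x | ∃ j, P j ∧ x = f j}.Nonempty := ⟨f j, j, hj, rfl⟩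
  obtain ⟨_, ⟨k, hk, rfl⟩, hlt⟩ := exists_lt_of_lt_csSup hne h
  exact ⟨k, hk, hlt⟩

section deltaBar

variable {K : ℕ} {μ : Fin K → ℝ} {τ : ℝ} {p : Fin K → ℝ} {i_u i_l i : Fin K} {c : ℝ}

lemma exists_witness_of_lt_deltaBar_of_pos (hi : τ ≤ μ i)
    (h : c < deltaBar K μ τ p i_u i_l i) : ∃ j, c < p j - p i_l ∧ c < p i - p j := by
  rw [deltaBar, if_pos hi] at h
  obtain ⟨j, -, hj⟩ := exists_lt_of_lt_sSup_setOf ⟨i, hi⟩ h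
  exact ⟨j, lt_min_iff.1 hj⟩

lemma exists_witness_of_lt_deltaBar_of_neg (hi : μ i < τ)
    (h : c < deltaBar K μ τ p i_u i_l i) : ∃ j, c < p j - p i ∧ c < p i_u - p j := by
  rw [deltaBar, if_neg hi.not_ge] at h
  obtain ⟨j, -, hj⟩ := exists_lt_of_lt_sSup_setOf ⟨i, hi⟩ h
  exact ⟨j, lt_min_iff.1 hj⟩

end deltaBar

lemma lt_sub_of_abs_sub_le {x y x' y' γ c : ℝ} (hx : |x' - x| ≤ γ) (hy : |y' - y| ≤ γ)
    (h : c + 2 * γ < x - y) : c < x' - y' := by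
  linarith [(abs_le.1 hx).1, (abs_le.1 hy).2]

/-- In the positive case `b`, `a` are the boundary arms `i_b`, `i_{b+1}` and `l` is `i_l`. -/
lemma two_mul_lt_sub_of_witness {ι : Type*} {p phat : ι → ℝ} {γ : ℝ}
    (hest : ∀ i, |phat i - p i| ≤ γ) {i j a b l : ι} (hbl : p b ≤ p l)
    (hjl : 4 * γ < p j - p l) (hij : 4 * γ < p i - p j)
    (hcross : phat b < phat j → phat a ≤ phat j) : 2 * γ < phat i - phat a := by
  have hγ : 0 ≤ γ := (abs_nonneg _).trans (hest i)
  have hjb : phat b < phat j := by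
    have := lt_sub_of_abs_sub_le (hest j) (hest b) (c := 2 * γ) (by linarith)
    linarith
  have hij' := lt_sub_of_abs_sub_le (hest i) (hest j) (c := 2 * γ) (by linarith)
  linarith [hcross hjb]

theorem rank_search_elimination_general (K : ℕ) (μ : Fin K → ℝ) (τ : ℝ)
    (p phat : Fin K → ℝ) (γ : ℝ)
    (hest : ∀ i, |phat i - p i| ≤ γ)
    (i_u i_l : Fin K)
    (hu_min : ∀ i, τ ≤ μ i → p i_u ≤ p i)
    (hl_max : ∀ i, μ i < τ → p i ≤ p i_l)
    (ib ib1 : Fin K)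
    (hib_neg : μ ib < τ) (hib1_pos : τ ≤ μ ib1)
    (hadj : ∀ j, phat j < phat ib1 → phat j ≤ phat ib) :
    ∀ i, i ≠ i_u → i ≠ i_l → 4 * γ < deltaBar K μ τ p i_u i_l i →
      (τ ≤ μ i → 2 * γ < phat i - phat ib1) ∧
      (μ i < τ → phat i - phat ib < -(2 * γ)) := by
  intro i _ _ hΔ
  constructor
  · intro hpos
    obtain ⟨j, hjl, hij⟩ := exists_witness_of_lt_deltaBar_of_pos hpos hΔ
    exact two_mul_lt_sub_of_witness hest (hl_max ib hib_neg) hjl hij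
      fun hbj => not_lt.1 fun hj1 => (hadj j hj1).not_gt hbj
  · intro hneg
    obtain ⟨j, hij, hju⟩ := exists_witness_of_lt_deltaBar_of_neg hneg hΔ
    have hest_neg : ∀ k, |-phat k - -p k| ≤ γ := fun k => by
      rw [neg_sub_neg, abs_sub_comm]; exact hest k
    have := two_mul_lt_sub_of_witness hest_neg (i := i) (j := j) (neg_le_neg (hu_min ib1 hib1_pos))
      (by linarith) (by linarith) fun h => neg_le_neg (hadj j (neg_lt_neg_iff.1 h))
    linarith

/-- Elimination condition in Rank-Search. Assume the uniform estimation event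
`|p̂ i - p i| ≤ γ`, the score-separation assumption, and that binary search on the list
sorted by `p̂` returns a boundary with adjacent arms `i_b` (truly negative) and `i_{b+1}`
(truly positive). Then every arm `i ∉ {i_u, i_l}` with `Δ̄ᶜ i > 4γ` is labeled in this round:
if `i` is positive then `p̂ i - p̂ i_{b+1} > 2γ`, and if `i` is negative then
`p̂ i - p̂ i_b < -2γ`. -/
theorem rank_search_elimination (K : ℕ) (μ : Fin K → ℝ) (τ : ℝ)
    (p phat : Fin K → ℝ) (γ : ℝ) (hγ : 0 < γ)
    (hsep : ∀ i j, τ ≤ μ i → μ j < τ → p j < p i)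
    (hest : ∀ i, |phat i - p i| ≤ γ)
    (i_u i_l : Fin K)
    (hu_pos : τ ≤ μ i_u) (hl_neg : μ i_l < τ)
    (hu_min : ∀ i, τ ≤ μ i → p i_u ≤ p i)
    (hl_max : ∀ i, μ i < τ → p i ≤ p i_l)
    (ib ib1 : Fin K)
    (hib_neg : μ ib < τ) (hib1_pos : τ ≤ μ ib1)
    (hb_le : phat ib ≤ phat ib1)
    (hadj : ∀ j, phat j < phat ib1 → phat j ≤ phat ib) :
    ∀ i, i ≠ i_u → i ≠ i_l → 4 * γ < deltaBar K μ τ p i_u i_l i →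
      (τ ≤ μ i → 2 * γ < phat i - phat ib1) ∧
      (μ i < τ → phat i - phat ib < -(2 * γ)) :=
  rank_search_elimination_general K μ τ p phat γ hest i_u i_l hu_min hl_max ib ib1 hib_neg hib1_pos
    hadj
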